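/- arXiv:1705.03427 — 5 statements merged into one kernel-verified Lean document; each statement's English description precedes it below -/
import Mathlib

section
/- Let G be a finite graph on vertex set [N] with maximal degree Δ, let k < N, and define φ_k(G) = min over nonempty S ⊆ [N] with |S| ≤ k of |E(S,S^c)|/|S|. Let G' be the graph on [k+1] obtained from G by collapsing vertices k+1,...,N into a single vertex k+1 (keeping all edges, possibly with multiplicity). Then the second smallest eigenvalue λ_2 of the Laplacian of G' satisfies λ_2 ≥ φ_k(G)²/(2Δ). -/
/-!
Let `f` be an eigenvector of the collapsed Laplacian with eigenvalue `λ`, signed so that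
`f ≤ 0` at the merged vertex. Its positive part `g` vanishes there and has Rayleigh quotient at
most `λ`. Pulled back to `G`, `g²` is supported on at most `k` vertices, so peeling it into
level sets turns the isoperimetric bound into `2 φ ‖g‖² ≤ ∑ A'ᵤᵥ |gᵤ² - gᵥ²|`. By
Cauchy–Schwarz the right-hand side is at most
`(∑ A'ᵤᵥ (gᵤ - gᵥ)²)^½ (∑ A'ᵤᵥ (gᵤ + gᵥ)²)^½ ≤ (2λ‖g‖²)^½ (4Δ‖g‖²)^½`,
where the last factor is computed in `G`, whose degrees are at most `Δ`.
-/

open Finset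

theorem max_sub_eq_of_eq_add_indicator {α : Type*} [DecidableEq α] {S : Finset α}
    {H H' : α → ℝ} {t : ℝ} (ht : 0 ≤ t) (hH' : 0 ≤ H') (hH'S : ∀ w ∉ S, H' w = 0)
    (hH : ∀ w, H w = H' w + if w ∈ S then t else 0) (w x : α) :
    max (H w - H x) 0 = max (H' w - H' x) 0 + if w ∈ S ∧ x ∉ S then t else 0 := by
  have hw₀ : 0 ≤ H' w := hH' w
  have hx₀ : 0 ≤ H' x := hH' x
  by_cases hw : w ∈ S <;> by_cases hx : x ∈ S
  · simp [hH, hw, hx]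
  · simp only [hH, hw, hx, hH'S x hx, if_true, if_false, not_false_eq_true, and_self]
    rw [max_eq_left (by linarith), max_eq_left (by linarith)]
    ring
  · simp only [hH, hw, hx, hH'S w hw, if_true, if_false, false_and]
    rw [max_eq_right (by linarith), max_eq_right (by linarith)]
    ring
  · simp [hH, hw, hx, hH'S w hw, hH'S x hx]

namespace Fin

variable {N k : ℕ}

theorem filter_clamp_eq_of_lt (hk : k ≤ N) {u : Fin (k + 1)} (hu : (u : ℕ) < k) :
    univ.filter (fun w : Fin N => clamp w k = u) = {⟨u, by omega⟩} := by
  ext w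
  simp only [mem_filter, mem_univ, true_and, mem_singleton, Fin.ext_iff, coe_clamp]
  omega

theorem filter_clamp_eq_last :
    univ.filter (fun w : Fin N => clamp w k = last k)
      = univ.filter (fun w : Fin N => k ≤ (w : ℕ)) := by
  ext w
  simp [Fin.ext_iff]

theorem sum_comp_clamp (hk : k < N) {F : Fin (k + 1) → ℝ} (hF : F (last k) = 0) :
    ∑ w : Fin N, F (clamp w k) = ∑ u, F u := by
  refine (Fintype.sum_of_injective (castLE hk) (castLE_injective hk) _ _
    (fun w hw => ?_) fun u => ?_).symm
  · have : k + 1 ≤ (w : ℕ) := by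
      by_contra h
      exact hw ⟨⟨w, by omega⟩, rfl⟩
    rw [clamp_eq_last _ _ (by omega), hF]
  · congr
    ext
    simp [Nat.min_eq_left (Nat.lt_succ_iff.1 u.2)]

end Fin

namespace Matrix

section

variable {α : Type*} [Fintype α]

theorem sum_sum_mul_abs_sub {B : Matrix α α ℝ} (hB : B.IsSymm) (H : α → ℝ) :
    ∑ u, ∑ v, B u v * |H u - H v| = 2 * ∑ u, ∑ v, B u v * max (H u - H v) 0 := by
  have hswap : ∑ u, ∑ v, B u v * max (-(H u - H v)) 0 = ∑ u, ∑ v, B u v * max (H u - H v) 0 := by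
    rw [sum_comm]
    exact sum_congr rfl fun u _ => sum_congr rfl fun v _ => by rw [hB.apply u v, neg_sub]
  simp only [← max_zero_add_max_neg_zero_eq_abs_self, mul_add, sum_add_distrib, hswap]
  ring

theorem sq_sum_sum_mul_abs_sq_sub_sq_le {B : Matrix α α ℝ} (hB : ∀ u v, 0 ≤ B u v)
    (g : α → ℝ) :
    (∑ u, ∑ v, B u v * |g u ^ 2 - g v ^ 2|) ^ 2
      ≤ (∑ u, ∑ v, B u v * (g u - g v) ^ 2) * ∑ u, ∑ v, B u v * (g u + g v) ^ 2 := by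
  simp only [← Fintype.sum_prod_type']
  refine sum_sq_le_sum_mul_sum_of_sq_le_mul _ (fun p _ => mul_nonneg (hB _ _) (sq_nonneg _))
    (fun p _ => mul_nonneg (hB _ _) (sq_nonneg _)) fun p _ => le_of_eq ?_
  rw [mul_pow, sq_abs]
  ring

theorem sum_sum_mul_add_sq_le {B : Matrix α α ℝ} (hB : B.IsSymm) (hB₀ : ∀ u v, 0 ≤ B u v)
    {Δ : ℝ} (hΔ : ∀ u, ∑ v, B u v ≤ Δ) (G : α → ℝ) :
    ∑ u, ∑ v, B u v * (G u + G v) ^ 2 ≤ 4 * Δ * ∑ u, G u ^ 2 := by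
  have hswap : ∑ u, ∑ v, B u v * G v ^ 2 = ∑ u, ∑ v, B u v * G u ^ 2 := by
    rw [sum_comm]
    exact sum_congr rfl fun u _ => sum_congr rfl fun v _ => by rw [hB.apply u v]
  calc ∑ u, ∑ v, B u v * (G u + G v) ^ 2
      ≤ ∑ u, ∑ v, (2 * (B u v * G u ^ 2) + 2 * (B u v * G v ^ 2)) := by
        gcongr with u _ v _
        nlinarith [hB₀ u v, mul_nonneg (hB₀ u v) (sq_nonneg (G u - G v))]
    _ = 4 * ∑ u, (∑ v, B u v) * G u ^ 2 := by
        simp only [sum_add_distrib, ← mul_sum, hswap, sum_mul]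
        ring
    _ ≤ 4 * ∑ u, Δ * G u ^ 2 := by
        gcongr with u _
        exact hΔ u
    _ = 4 * Δ * ∑ u, G u ^ 2 := by rw [← mul_sum, mul_assoc]

variable [DecidableEq α]

def laplacian (B : Matrix α α ℝ) : Matrix α α ℝ :=
  diagonal (fun v => ∑ u, B v u) - B

theorem laplacian_mulVec_apply (B : Matrix α α ℝ) (p : α → ℝ) (u : α) :
    (B.laplacian *ᵥ p) u = ∑ v, B u v * (p u - p v) := by
  simp only [laplacian, sub_mulVec, Pi.sub_apply, mulVec_diagonal, sum_mul, mul_sub,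
    sum_sub_distrib]
  rfl

theorem dotProduct_laplacian_mulVec (B : Matrix α α ℝ) (g p : α → ℝ) :
    g ⬝ᵥ B.laplacian *ᵥ p = ∑ u, ∑ v, B u v * (g u * p u - g u * p v) := by
  simp only [dotProduct, laplacian_mulVec_apply, mul_sum]
  refine sum_congr rfl fun u _ => sum_congr rfl fun v _ => by ring

theorem sum_sum_mul_sub_sq {B : Matrix α α ℝ} (hB : B.IsSymm) (g : α → ℝ) :
    ∑ u, ∑ v, B u v * (g u - g v) ^ 2 = 2 * (g ⬝ᵥ B.laplacian *ᵥ g) := by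
  have hswap : ∑ u, ∑ v, B u v * (g v * g v - g v * g u)
      = ∑ u, ∑ v, B u v * (g u * g u - g u * g v) := by
    rw [sum_comm]
    exact sum_congr rfl fun u _ => sum_congr rfl fun v _ => by rw [hB.apply v u]
  rw [dotProduct_laplacian_mulVec, two_mul]
  nth_rewrite 2 [← hswap]
  simp only [← sum_add_distrib]
  exact sum_congr rfl fun u _ => sum_congr rfl fun v _ => by ring

theorem dotProduct_laplacian_mulVec_nonpos {B : Matrix α α ℝ} (hB : ∀ u v, 0 ≤ B u v)
    {g p : α → ℝ} (hg : 0 ≤ g) (hp : 0 ≤ p) (hgp : ∀ u, g u * p u = 0) :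
    g ⬝ᵥ B.laplacian *ᵥ p ≤ 0 := by
  rw [dotProduct_laplacian_mulVec]
  refine sum_nonpos fun u _ => sum_nonpos fun v _ => ?_
  rw [hgp, zero_sub, mul_neg]
  exact neg_nonpos.2 (mul_nonneg (hB u v) (mul_nonneg (hg u) (hp v)))

theorem dotProduct_laplacian_mulVec_posPart_le {B : Matrix α α ℝ} (hB : ∀ u v, 0 ≤ B u v)
    {f : α → ℝ} {lam : ℝ} (hf : B.laplacian *ᵥ f = lam • f) :
    (fun u => max (f u) 0) ⬝ᵥ B.laplacian *ᵥ (fun u => max (f u) 0)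
      ≤ lam * ∑ u, max (f u) 0 ^ 2 := by
  set g : α → ℝ := fun u => max (f u) 0
  have hgf : ∀ u, g u * f u = g u ^ 2 := fun u => by
    rcases le_total (f u) 0 with h | h <;> simp [g, h, sq]
  have hneg : g ⬝ᵥ B.laplacian *ᵥ (g - f) ≤ 0 := by
    refine dotProduct_laplacian_mulVec_nonpos hB (fun u => le_max_right _ _)
      (fun u => sub_nonneg.2 (le_max_left _ _)) fun u => ?_
    rw [Pi.sub_apply, mul_sub, hgf, sq, sub_self]
  have heig : g ⬝ᵥ B.laplacian *ᵥ f = lam * ∑ u, g u ^ 2 := by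
    simp only [hf, dotProduct, Pi.smul_apply, smul_eq_mul, mul_sum, ← hgf]
    exact sum_congr rfl fun u _ => by ring
  rw [mulVec_sub, dotProduct_sub, heig] at hneg
  linarith

def IsoperimetricBound (B : Matrix α α ℝ) (k : ℕ) (φ : ℝ) : Prop :=
  ∀ S : Finset α, S.Nonempty → S.card ≤ k → φ * S.card ≤ ∑ u ∈ S, ∑ v ∈ Sᶜ, B u v

theorem sum_sum_mul_max_sub_of_eq_add_indicator (B : Matrix α α ℝ) {S : Finset α}
    {H H' : α → ℝ} {t : ℝ} (ht : 0 ≤ t) (hH' : 0 ≤ H') (hH'S : ∀ w ∉ S, H' w = 0)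
    (hH : ∀ w, H w = H' w + if w ∈ S then t else 0) :
    ∑ w, ∑ x, B w x * max (H w - H x) 0
      = ∑ w, ∑ x, B w x * max (H' w - H' x) 0 + t * ∑ u ∈ S, ∑ v ∈ Sᶜ, B u v := by
  simp only [max_sub_eq_of_eq_add_indicator ht hH' hH'S hH, mul_add, sum_add_distrib, ite_and,
    mul_ite, mul_zero, ← mem_compl, sum_ite_mem, univ_inter, sum_ite_irrel, sum_const_zero,
    mul_comm t, sum_mul]

theorem IsoperimetricBound.mul_sum_le {B : Matrix α α ℝ} {k : ℕ} {φ : ℝ}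
    (hiso : IsoperimetricBound B k φ) {S : Finset α} (hS : S.card ≤ k) {H : α → ℝ}
    (hH : 0 ≤ H) (hHS : ∀ w ∉ S, H w = 0) :
    φ * ∑ w, H w ≤ ∑ w, ∑ x, B w x * max (H w - H x) 0 := by
  induction S using Finset.strongInduction generalizing H with
  | H S ih =>
  rcases S.eq_empty_or_nonempty with rfl | hne
  · simp [funext fun w => hHS w (notMem_empty w)]
  obtain ⟨w₀, hw₀, hmin⟩ := S.exists_min_image H hne
  -- peel off the layer `H w₀ • 1_S`, which leaves a function supported on `S.erase w₀`
  set H' : α → ℝ := fun w => H w - if w ∈ S then H w₀ else 0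
  have hH' : 0 ≤ H' := fun w => by
    by_cases hw : w ∈ S
    · simpa [H', hw] using hmin w hw
    · simpa [H', hw] using hH w
  have hH'S : ∀ w ∉ S.erase w₀, H' w = 0 := fun w hw => by
    by_cases hwS : w ∈ S
    · simp [H', show w = w₀ by simpa [hwS] using hw, hw₀]
    · simp [H', hwS, hHS w hwS]
  have hsum : ∑ w, H w = ∑ w, H' w + H w₀ * S.card := by
    simp [H', sum_sub_distrib, mul_comm]
  calc φ * ∑ w, H w = φ * ∑ w, H' w + H w₀ * (φ * S.card) := by rw [hsum]; ring
    _ ≤ ∑ w, ∑ x, B w x * max (H' w - H' x) 0 + H w₀ * ∑ u ∈ S, ∑ v ∈ Sᶜ, B u v :=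
        add_le_add (ih _ (erase_ssubset hw₀) ((card_erase_le).trans hS) hH' hH'S)
          (mul_le_mul_of_nonneg_left (hiso S hne hS) (hH w₀))
    _ = ∑ w, ∑ x, B w x * max (H w - H x) 0 :=
        (sum_sum_mul_max_sub_of_eq_add_indicator B (hH w₀) hH'
          (fun w hw => hH'S w (fun h => hw (mem_of_mem_erase h))) fun w => by simp [H']).symm

end

variable {N k : ℕ}

/-- Vertices `k, …, N - 1` (the paper's `k + 1, …, N`) are merged into the vertex `Fin.last k`;
the loops this creates at the merged vertex are dropped. -/
def collapse (A : Matrix (Fin N) (Fin N) ℝ) (k : ℕ) : Matrix (Fin (k + 1)) (Fin (k + 1)) ℝ :=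
  fun u v => if u = Fin.last k ∧ v = Fin.last k then 0 else
    ∑ w ∈ univ.filter (fun w : Fin N => Fin.clamp w k = u),
      ∑ x ∈ univ.filter (fun x : Fin N => Fin.clamp x k = v), A w x

theorem eq_collapse (hk : k < N) {A : Matrix (Fin N) (Fin N) ℝ}
    {A' : Matrix (Fin (k + 1)) (Fin (k + 1)) ℝ}
    (hA' : ∀ u v : Fin (k + 1), A' u v =
      if hu : (u : ℕ) < k then
        (if hv : (v : ℕ) < k then A ⟨u, hu.trans hk⟩ ⟨v, hv.trans hk⟩
         else ∑ w ∈ Finset.univ.filter (fun w : Fin N => k ≤ (w : ℕ)), A ⟨u, hu.trans hk⟩ w)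
      else
        (if hv : (v : ℕ) < k then
          ∑ w ∈ Finset.univ.filter (fun w : Fin N => k ≤ (w : ℕ)), A w ⟨v, hv.trans hk⟩
         else 0)) :
    A' = collapse A k := by
  ext u v
  have hlast {u : Fin (k + 1)} (hu : ¬ (u : ℕ) < k) : u = Fin.last k := by
    ext; simp; omega
  have hne {u : Fin (k + 1)} (hu : (u : ℕ) < k) : u ≠ Fin.last k := by
    simp [Fin.ext_iff]; omega
  rw [hA', collapse]
  by_cases hu : (u : ℕ) < k <;> by_cases hv : (v : ℕ) < k <;>
    simp [hu, hv, hne, hlast, Fin.filter_clamp_eq_of_lt hk.le, Fin.filter_clamp_eq_last]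

variable {A : Matrix (Fin N) (Fin N) ℝ}

theorem collapse_isSymm (hA : A.IsSymm) : (collapse A k).IsSymm := by
  ext u v
  simp only [transpose_apply, collapse, and_comm]
  congr 1
  exact sum_comm.trans (sum_congr rfl fun _ _ => sum_congr rfl fun _ _ => hA.apply _ _)

theorem collapse_nonneg (hA : ∀ u v, 0 ≤ A u v) (u v : Fin (k + 1)) : 0 ≤ collapse A k u v := by
  unfold collapse
  split_ifs
  exacts [le_rfl, sum_nonneg fun w _ => sum_nonneg fun x _ => hA w x]

theorem sum_sum_collapse_mul (A : Matrix (Fin N) (Fin N) ℝ) {F : Fin (k + 1) → Fin (k + 1) → ℝ}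
    (hF : F (Fin.last k) (Fin.last k) = 0) :
    ∑ u, ∑ v, collapse A k u v * F u v
      = ∑ w, ∑ x, A w x * F (Fin.clamp w k) (Fin.clamp x k) := by
  have hfiber (u v : Fin (k + 1)) : collapse A k u v * F u v
      = ∑ w ∈ univ.filter (fun w : Fin N => Fin.clamp w k = u),
          ∑ x ∈ univ.filter (fun x : Fin N => Fin.clamp x k = v),
            A w x * F (Fin.clamp w k) (Fin.clamp x k) := by
    unfold collapse
    split_ifs with huv
    · obtain ⟨rfl, rfl⟩ := huv
      rw [zero_mul]
      refine (sum_eq_zero fun w hw => sum_eq_zero fun x hx => ?_).symm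
      rw [(mem_filter.1 hw).2, (mem_filter.1 hx).2, hF, mul_zero]
    · rw [sum_mul]
      refine sum_congr rfl fun w hw => ?_
      rw [sum_mul]
      refine sum_congr rfl fun x hx => ?_
      rw [(mem_filter.1 hw).2, (mem_filter.1 hx).2]
  simp_rw [hfiber]
  refine (sum_congr rfl fun u _ => ?_).trans (sum_fiberwise univ (fun w : Fin N => Fin.clamp w k) _)
  rw [sum_comm]
  exact sum_congr rfl fun w _ => sum_fiberwise univ _ _

theorem two_mul_le_sum_sum_collapse_mul_abs (hk : k < N) (hA : A.IsSymm) {φ : ℝ}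
    (hiso : IsoperimetricBound A k φ) {g : Fin (k + 1) → ℝ} (hg : g (Fin.last k) = 0) :
    2 * (φ * ∑ u, g u ^ 2) ≤ ∑ u, ∑ v, collapse A k u v * |g u ^ 2 - g v ^ 2| := by
  rw [sum_sum_mul_abs_sub (collapse_isSymm hA),
    sum_sum_collapse_mul A (F := fun u v => max (g u ^ 2 - g v ^ 2) 0) (by simp [hg]),
    ← Fin.sum_comp_clamp hk (F := fun u => g u ^ 2) (by simp [hg])]
  refine mul_le_mul_of_nonneg_left (hiso.mul_sum_le (S := univ.map (Fin.castLEEmb hk.le))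
    (by simp) (fun w => sq_nonneg _) fun w hw => ?_) zero_le_two
  have hkw : k ≤ (w : ℕ) := by
    by_contra h
    exact hw (mem_map.2 ⟨⟨w, by omega⟩, mem_univ _, rfl⟩)
  simp [Fin.clamp_eq_last _ _ hkw, hg]

theorem sum_sum_collapse_mul_add_sq_le (hk : k < N) (hA : A.IsSymm) (hA₀ : ∀ u v, 0 ≤ A u v)
    {Δ : ℝ} (hΔ : ∀ v, ∑ u, A v u ≤ Δ) {g : Fin (k + 1) → ℝ} (hg : g (Fin.last k) = 0) :
    ∑ u, ∑ v, collapse A k u v * (g u + g v) ^ 2 ≤ 4 * Δ * ∑ u, g u ^ 2 := by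
  rw [sum_sum_collapse_mul A (F := fun u v => (g u + g v) ^ 2) (by simp [hg]),
    ← Fin.sum_comp_clamp hk (F := fun u => g u ^ 2) (by simp [hg])]
  exact sum_sum_mul_add_sq_le hA hA₀ hΔ _

theorem sq_div_le_of_laplacian_collapse_mulVec_eq (hk : k < N) (hA : A.IsSymm)
    (hA₀ : ∀ u v, 0 ≤ A u v) {Δ : ℝ} (hΔ : ∀ v, ∑ u, A v u ≤ Δ) {φ : ℝ} (hφ : 0 ≤ φ)
    (hiso : IsoperimetricBound A k φ) {lam : ℝ} {f : Fin (k + 1) → ℝ} (hf : f ≠ 0)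
    (hsum : ∑ u, f u = 0) (hlast : f (Fin.last k) ≤ 0)
    (heig : (collapse A k).laplacian *ᵥ f = lam • f) :
    φ ^ 2 / (2 * Δ) ≤ lam := by
  set g : Fin (k + 1) → ℝ := fun u => max (f u) 0
  set s := ∑ u, g u ^ 2
  have hg : g (Fin.last k) = 0 := max_eq_right hlast
  obtain ⟨u₀, -, hu₀⟩ := exists_pos_of_sum_zero_of_exists_nonzero f hsum
    (by simpa using Function.ne_iff.1 hf)
  have hs : 0 < s := (pow_pos (lt_max_of_lt_left hu₀) 2).trans_le
    (single_le_sum (fun u _ => sq_nonneg (g u)) (mem_univ u₀))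
  have hE : ∑ u, ∑ v, collapse A k u v * (g u - g v) ^ 2 ≤ 2 * (lam * s) := by
    rw [sum_sum_mul_sub_sq (collapse_isSymm hA)]
    linarith [dotProduct_laplacian_mulVec_posPart_le (collapse_nonneg hA₀) heig]
  have hE₀ : 0 ≤ ∑ u, ∑ v, collapse A k u v * (g u - g v) ^ 2 :=
    sum_nonneg fun u _ => sum_nonneg fun v _ => mul_nonneg (collapse_nonneg hA₀ u v) (sq_nonneg _)
  have hP₀ : 0 ≤ ∑ u, ∑ v, collapse A k u v * (g u + g v) ^ 2 :=
    sum_nonneg fun u _ => sum_nonneg fun v _ => mul_nonneg (collapse_nonneg hA₀ u v) (sq_nonneg _)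
  have hlam : 0 ≤ lam := nonneg_of_mul_nonneg_left (by linarith) hs
  rcases le_or_gt Δ 0 with hΔ₀ | hΔ₀
  · exact (div_nonpos_of_nonneg_of_nonpos (sq_nonneg φ) (by linarith)).trans hlam
  have key : (2 * (φ * s)) ^ 2 ≤ 2 * (lam * s) * (4 * Δ * s) :=
    calc (2 * (φ * s)) ^ 2
        ≤ (∑ u, ∑ v, collapse A k u v * |g u ^ 2 - g v ^ 2|) ^ 2 :=
          pow_le_pow_left₀ (by positivity) (two_mul_le_sum_sum_collapse_mul_abs hk hA hiso hg) 2
      _ ≤ _ := sq_sum_sum_mul_abs_sq_sub_sq_le (collapse_nonneg hA₀) g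
      _ ≤ _ := mul_le_mul hE (sum_sum_collapse_mul_add_sq_le hk hA hA₀ hΔ hg) hP₀ (by positivity)
  rw [div_le_iff₀ (by positivity)]
  refine le_of_mul_le_mul_right (a := 4 * s ^ 2) ?_ (by positivity)
  linarith

end Matrix

/-- Collapsing preserves the Cheeger bound: let `A` be the (symmetric, nonnegative)
adjacency matrix of a graph on `[N]` with maximal degree `Δ`, `k < N`, and let `φ ≥ 0`
be such that `φ |S| ≤ |E(S, Sᶜ)|` for every nonempty `S` with `|S| ≤ k` (so in particular
this holds for `φ = φ_k(G)`).  Let `A'` be the adjacency matrix on `[k+1]` obtained by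
collapsing vertices `k+1, ..., N` into a single vertex, and `L'` its Laplacian.  Then every
eigenvalue `lam` of `L'` with an eigenvector orthogonal to the constants satisfies
`lam ≥ φ² / (2Δ)`; i.e. the spectral gap `λ₂` of `L'` is at least `φ_k(G)² / (2Δ)`. -/
theorem stmt_5 (N k : ℕ) (hk : k < N)
    (A : Matrix (Fin N) (Fin N) ℝ) (hsymm : A.IsSymm) (hpos : ∀ u v, 0 ≤ A u v)
    (Δ : ℝ) (hΔ : ∀ v, ∑ u, A v u ≤ Δ)
    (φ : ℝ) (hφ0 : 0 ≤ φ)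
    (hiso : ∀ S : Finset (Fin N), S.Nonempty → S.card ≤ k →
      φ * S.card ≤ ∑ u ∈ S, ∑ v ∈ Sᶜ, A u v)
    (A' : Matrix (Fin (k + 1)) (Fin (k + 1)) ℝ)
    (hA' : ∀ u v : Fin (k + 1), A' u v =
      if hu : (u : ℕ) < k then
        (if hv : (v : ℕ) < k then A ⟨u, by omega⟩ ⟨v, by omega⟩
         else ∑ w ∈ Finset.univ.filter (fun w : Fin N => k ≤ (w : ℕ)), A ⟨u, by omega⟩ w)
      else
        (if hv : (v : ℕ) < k then
          ∑ w ∈ Finset.univ.filter (fun w : Fin N => k ≤ (w : ℕ)), A w ⟨v, by omega⟩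
         else 0))
    (L' : Matrix (Fin (k + 1)) (Fin (k + 1)) ℝ)
    (hL' : L' = Matrix.diagonal (fun v => ∑ u, A' v u) - A')
    (lam : ℝ) (f : Fin (k + 1) → ℝ) (hf : f ≠ 0) (hortho : ∑ i, f i = 0)
    (heig : L'.mulVec f = lam • f) :
    φ ^ 2 / (2 * Δ) ≤ lam := by
  obtain rfl := Matrix.eq_collapse hk hA'
  subst hL'
  change (Matrix.collapse A k).laplacian.mulVec f = lam • f at heig
  rcases le_total (f (Fin.last k)) 0 with hlast | hlast
  · exact Matrix.sq_div_le_of_laplacian_collapse_mulVec_eq hk hsymm hpos hΔ hφ0 hiso hf hortho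
      hlast heig
  · refine Matrix.sq_div_le_of_laplacian_collapse_mulVec_eq hk hsymm hpos hΔ hφ0 hiso
      (neg_ne_zero.2 hf) (by simp [hortho]) (by simpa using hlast) ?_
    rw [Matrix.mulVec_neg, heig, smul_neg]
end

section
/- Let L be the Laplacian of a finite graph on vertex set V, let f be an eigenvector of L with eigenvalue λ, and suppose W = {v : f_v > 0} is nonempty. Define g_v = max(f_v, 0). Then λ·⟨g,g⟩ ≥ ⟨Lg, g⟩. -/
/-- If `f` is an eigenvector of the graph Laplacian `L = D − A` with eigenvalue `lam`,
`W = {v : f v > 0}` is nonempty, and `g = max(f, 0)`, then `⟨Lg, g⟩ ≤ lam ⟨g, g⟩`. -/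
theorem stmt_6 {V : Type*} [Fintype V] [DecidableEq V]
    (A : Matrix V V ℝ) (hsymm : A.IsSymm) (hpos : ∀ u v, 0 ≤ A u v)
    (L : Matrix V V ℝ) (hL : L = Matrix.diagonal (fun v => ∑ u, A v u) - A)
    (lam : ℝ) (f : V → ℝ) (heig : L.mulVec f = lam • f)
    (hW : ∃ v, 0 < f v)
    (g : V → ℝ) (hg : g = fun v => max (f v) 0) :
    ∑ v, L.mulVec g v * g v ≤ lam * ∑ v, g v * g v := by
  have hge : ∀ u, f u ≤ g u := fun u => hg ▸ le_max_left _ _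
  have hgpos : ∀ u, 0 ≤ g u := fun u => hg ▸ le_max_right _ _
  have key : ∀ v, L.mulVec g v * g v ≤ lam * (g v * g v) := by
    intro v
    rcases eq_or_lt_of_le (hgpos v) with h0 | h0
    · simp [← h0]
    · have hfv : f v = g v := by
        have hf : 0 < f v := by
          by_contra h
          push_neg at h
          have : g v = 0 := by rw [hg]; exact max_eq_right h
          rw [this] at h0; exact lt_irrefl 0 h0
        rw [hg]; exact (max_eq_left hf.le).symm
      have hLf : L.mulVec f v = lam * f v := by
        rw [heig]; rfl
      have hmono : L.mulVec g v ≤ L.mulVec f v := by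
        rw [hL]
        simp only [Matrix.sub_mulVec, Matrix.mulVec_diagonal, Pi.sub_apply]
        rw [hfv]
        apply sub_le_sub_left
        apply Finset.sum_le_sum
        intro u _
        exact mul_le_mul_of_nonneg_left (hge u) (hpos v u)
      have : L.mulVec g v ≤ lam * g v := by rw [hLf, hfv] at hmono; exact hmono
      calc L.mulVec g v * g v ≤ lam * g v * g v :=
            mul_le_mul_of_nonneg_right this (hgpos v)
        _ = lam * (g v * g v) := mul_assoc _ _ _
  calc ∑ v, L.mulVec g v * g v ≤ ∑ v, lam * (g v * g v) :=
        Finset.sum_le_sum (fun v _ => key v)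
    _ = lam * ∑ v, g v * g v := (Finset.mul_sum _ _ _).symm
end

section
/- Let G = (V,E) be a finite weighted graph, k < |V|, and g: V → ℝ≥0 a function vanishing outside a set of vertices, such that every superlevel set V_i = {v : g_v ≥ t_i} (for t_i > 0) has size at most k. If φ_k(G) = min_{S: |S|≤k} |E(S,S^c)|/|S|, then Σ_{(u,v)∈E} a_{uv}·|g_u² − g_v²| ≥ φ_k(G)·Σ_v g_v². -/
open Finset

lemma coarea_aux {V : Type*} [Fintype V] [DecidableEq V] (k : ℕ)
    (a : Matrix V V ℝ) (hsymm : a.IsSymm) (hpos : ∀ u v, 0 ≤ a u v)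
    (φ : ℝ) (hφ0 : 0 ≤ φ)
    (hiso : ∀ S : Finset V, S.Nonempty → S.card ≤ k →
      φ * S.card ≤ ∑ u ∈ S, ∑ v ∈ Sᶜ, a u v) :
    ∀ n : ℕ, ∀ h : V → ℝ, (∀ v, 0 ≤ h v) →
      (Finset.univ.filter (fun v => 0 < h v)).card ≤ n →
      (∀ t : ℝ, 0 < t → (Finset.univ.filter (fun v => t ≤ h v)).card ≤ k) →
      φ * ∑ v, h v ≤ (1/2) * ∑ u, ∑ v, a u v * |h u - h v| := by
  intro n
  induction n with
  | zero =>
    intro h hh0 hcard _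
    have hz : ∀ v, h v = 0 := by
      intro v
      by_contra hv
      have hvpos : 0 < h v := lt_of_le_of_ne (hh0 v) (Ne.symm hv)
      have : v ∈ Finset.univ.filter (fun v => 0 < h v) := by
        simp [hvpos]
      have := Finset.card_pos.mpr ⟨v, this⟩
      omega
    simp [hz]
  | succ n ih =>
    intro h hh0 hcard hlev
    set S := Finset.univ.filter (fun v => 0 < h v) with hS
    have hmemS : ∀ v, v ∈ S ↔ 0 < h v := by
      intro v; simp [hS]
    have hzero : ∀ v, v ∉ S → h v = 0 := by
      intro v hv
      have := (hmemS v).not.mp hv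
      linarith [hh0 v]
    rcases S.eq_empty_or_nonempty with hSe | hSne
    · have hz : ∀ v, h v = 0 := by
        intro v
        apply hzero
        simp [hSe]
      simp [hz]
    · -- t = minimum positive value
      have himne : (S.image h).Nonempty := hSne.image h
      set t := (S.image h).min' himne with htdef
      obtain ⟨v0, hv0S, hv0⟩ := Finset.mem_image.mp ((S.image h).min'_mem himne)
      have htpos : 0 < t := by
        rw [htdef, ← hv0]; exact (hmemS v0).mp hv0S
      have htle : ∀ v ∈ S, t ≤ h v := fun v hv =>
        Finset.min'_le _ _ (Finset.mem_image_of_mem h hv)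
      set h' := fun v => if 0 < h v then h v - t else 0 with hh'def
      have hh'0 : ∀ v, 0 ≤ h' v := by
        intro v
        simp only [hh'def]
        split
        · have : t ≤ h v := htle v ((hmemS v).mpr ‹_›)
          linarith
        · exact le_refl 0
      have hh'supp : (Finset.univ.filter (fun v => 0 < h' v)) ⊆ S.erase v0 := by
        intro v hv
        simp only [Finset.mem_filter] at hv
        have hv' := hv.2
        simp only [hh'def] at hv'
        by_cases hc : 0 < h v
        · simp only [if_pos hc] at hv'
          refine Finset.mem_erase.mpr ⟨?_, (hmemS v).mpr hc⟩
          intro hvv0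
          rw [hvv0] at hv'
          rw [hv0] at hv'
          linarith
        · simp [if_neg hc] at hv'
      have hcard' : (Finset.univ.filter (fun v => 0 < h' v)).card ≤ n := by
        have h1 := Finset.card_le_card hh'supp
        have h2 : (S.erase v0).card = S.card - 1 := Finset.card_erase_of_mem hv0S
        have h3 : 1 ≤ S.card := Finset.card_pos.mpr hSne
        omega
      have hlev' : ∀ s : ℝ, 0 < s →
          (Finset.univ.filter (fun v => s ≤ h' v)).card ≤ k := by
        intro s hs
        have hsub : (Finset.univ.filter (fun v => s ≤ h' v)) ⊆
            (Finset.univ.filter (fun v => s + t ≤ h v)) := by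
          intro v hv
          simp only [Finset.mem_filter, Finset.mem_univ, true_and] at hv ⊢
          simp only [hh'def] at hv
          by_cases hc : 0 < h v
          · rw [if_pos hc] at hv; linarith
          · rw [if_neg hc] at hv; linarith
        exact le_trans (Finset.card_le_card hsub) (hlev (s + t) (by linarith))
      have IH := ih h' hh'0 hcard' hlev'
      -- indicator
      set χ := fun v => (if v ∈ S then (1:ℝ) else 0) with hχdef
      have hdecomp : ∀ v, h v = h' v + t * χ v := by
        intro v
        by_cases hv : v ∈ S
        · have := (hmemS v).mp hv
          simp [hh'def, hχdef, if_pos this, if_pos hv]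
        · have := hzero v hv
          simp [hh'def, hχdef, hv, this]
      have hkey : ∀ u v, |h u - h v| = |h' u - h' v| + t * |χ u - χ v| := by
        intro u v
        by_cases hu : u ∈ S <;> by_cases hv : v ∈ S
        · simp only [hχdef, if_pos hu, if_pos hv, sub_self, abs_zero, mul_zero, add_zero]
          rw [hdecomp u, hdecomp v]
          simp [hχdef, if_pos hu, if_pos hv]
        · have hv0' : h v = 0 := hzero v hv
          have hv'0 : h' v = 0 := by simp [hh'def, hzero v hv]
          rw [hdecomp u, hv0', hv'0]
          simp only [hχdef, if_pos hu, if_neg hv]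
          rw [sub_zero, sub_zero, sub_zero]
          rw [abs_of_nonneg (by linarith [hh'0 u] : (0:ℝ) ≤ h' u + t * 1),
            abs_of_nonneg (hh'0 u), abs_one]
        · have hu0' : h u = 0 := hzero u hu
          have hu'0 : h' u = 0 := by simp [hh'def, hzero u hu]
          rw [hdecomp v, hu0', hu'0]
          simp only [hχdef, if_neg hu, if_pos hv]
          rw [zero_sub, zero_sub, zero_sub, abs_neg, abs_neg, abs_neg]
          rw [abs_of_nonneg (by linarith [hh'0 v] : (0:ℝ) ≤ h' v + t * 1),
            abs_of_nonneg (hh'0 v), abs_one]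
        · have hu0' : h u = 0 := hzero u hu
          have hv0' : h v = 0 := hzero v hv
          have hu'0 : h' u = 0 := by simp [hh'def, hzero u hu]
          have hv'0 : h' v = 0 := by simp [hh'def, hzero v hv]
          simp [hu0', hv0', hu'0, hv'0, hχdef, hu, hv]
      -- sum decomposition
      have hsum1 : ∑ v, h v = (∑ v, h' v) + t * S.card := by
        have : ∑ v, h v = ∑ v, (h' v + t * χ v) := by
          apply Finset.sum_congr rfl
          intro v _
          exact hdecomp v
        rw [this, Finset.sum_add_distrib, ← Finset.mul_sum]
        congr 1
        congr 1
        simp only [hχdef]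
        rw [Finset.sum_ite_mem, Finset.univ_inter, Finset.sum_const, nsmul_eq_mul, mul_one]
      -- edge sum decomposition
      have hsum2 : ∑ u, ∑ v, a u v * |h u - h v| =
          (∑ u, ∑ v, a u v * |h' u - h' v|) + t * ∑ u, ∑ v, a u v * |χ u - χ v| := by
        rw [Finset.mul_sum]
        rw [← Finset.sum_add_distrib]
        apply Finset.sum_congr rfl
        intro u _
        rw [Finset.mul_sum, ← Finset.sum_add_distrib]
        apply Finset.sum_congr rfl
        intro v _
        rw [hkey u v]
        ring
      -- indicator edge sum = 2 * cut
      have hcut : ∑ u, ∑ v, a u v * |χ u - χ v| = 2 * ∑ u ∈ S, ∑ v ∈ Sᶜ, a u v := by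
        have hterm : ∀ u v, a u v * |χ u - χ v| =
            (if u ∈ S ∧ v ∉ S then a u v else 0) + (if u ∉ S ∧ v ∈ S then a u v else 0) := by
          intro u v
          by_cases hu : u ∈ S <;> by_cases hv : v ∈ S <;>
            simp [hχdef, hu, hv]
        calc ∑ u, ∑ v, a u v * |χ u - χ v|
            = ∑ u, ∑ v, ((if u ∈ S ∧ v ∉ S then a u v else 0)
                + (if u ∉ S ∧ v ∈ S then a u v else 0)) := by
              apply Finset.sum_congr rfl; intro u _
              apply Finset.sum_congr rfl; intro v _
              exact hterm u v
          _ = (∑ u, ∑ v, if u ∈ S ∧ v ∉ S then a u v else 0)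
              + (∑ u, ∑ v, if u ∉ S ∧ v ∈ S then a u v else 0) := by
              rw [← Finset.sum_add_distrib]
              apply Finset.sum_congr rfl; intro u _
              rw [← Finset.sum_add_distrib]
          _ = (∑ u ∈ S, ∑ v ∈ Sᶜ, a u v) + (∑ u ∈ S, ∑ v ∈ Sᶜ, a u v) := by
              have e1 : ∀ (b : V → V → ℝ),
                  (∑ u, ∑ v, if u ∈ S ∧ v ∉ S then b u v else 0)
                    = ∑ u ∈ S, ∑ v ∈ Sᶜ, b u v := by
                intro b
                have inner : ∀ u : V, (∑ v, if u ∈ S ∧ v ∉ S then b u v else 0)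
                    = if u ∈ S then ∑ v ∈ Sᶜ, b u v else 0 := by
                  intro u
                  by_cases hu : u ∈ S
                  · simp only [hu, true_and, if_true]
                    rw [← Finset.sum_filter]
                    congr 1
                    ext v; simp
                  · simp [hu]
                rw [Finset.sum_congr rfl (fun u _ => inner u), ← Finset.sum_filter]
                congr 1
                ext u; simp
              congr 1
              · exact e1 a
              · rw [Finset.sum_comm]
                have hcomm : ∀ x y : V, (if y ∉ S ∧ x ∈ S then a y x else 0)
                    = (if x ∈ S ∧ y ∉ S then a y x else 0) := by
                  intro x y; exact if_congr and_comm rfl rfl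
                calc (∑ x, ∑ y, if y ∉ S ∧ x ∈ S then a y x else 0)
                    = ∑ x, ∑ y, if x ∈ S ∧ y ∉ S then a y x else 0 :=
                      Finset.sum_congr rfl fun x _ =>
                        Finset.sum_congr rfl fun y _ => hcomm x y
                  _ = ∑ u ∈ S, ∑ v ∈ Sᶜ, a v u := e1 (fun u v => a v u)
                  _ = ∑ u ∈ S, ∑ v ∈ Sᶜ, a u v :=
                      Finset.sum_congr rfl fun u _ =>
                        Finset.sum_congr rfl fun v _ => hsymm.apply u v
          _ = 2 * ∑ u ∈ S, ∑ v ∈ Sᶜ, a u v := by ring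
      -- isoperimetric bound
      have hScard : S.card ≤ k := by
        have hsub : S ⊆ Finset.univ.filter (fun v => t ≤ h v) := by
          intro v hv
          simp only [Finset.mem_filter, Finset.mem_univ, true_and]
          exact htle v hv
        exact le_trans (Finset.card_le_card hsub) (hlev t htpos)
      have hiso' := hiso S hSne hScard
      -- combine
      rw [hsum1, hsum2, hcut]
      have := mul_le_mul_of_nonneg_left hiso' (le_of_lt htpos)
      nlinarith [IH]

/-- Co-area/isoperimetry bound: for a finite weighted graph with symmetric nonnegative
weights `a`, a nonnegative function `g` all of whose positive superlevel sets
`{v : g v ≥ t}` (`t > 0`) have at most `k` vertices, and `φ` a lower bound for the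
isoperimetric ratio `e(S, Sᶜ)/|S|` over nonempty sets of size at most `k`, one has
`Σ_E a_{uv} |g_u² − g_v²| ≥ φ Σ_v g_v²` (edge sum over ordered pairs halved). -/
theorem stmt_8 {V : Type*} [Fintype V] [DecidableEq V] (k : ℕ)
    (a : Matrix V V ℝ) (hsymm : a.IsSymm) (hpos : ∀ u v, 0 ≤ a u v)
    (φ : ℝ) (hφ0 : 0 ≤ φ)
    (hiso : ∀ S : Finset V, S.Nonempty → S.card ≤ k →
      φ * S.card ≤ ∑ u ∈ S, ∑ v ∈ Sᶜ, a u v)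
    (g : V → ℝ) (hg : ∀ v, 0 ≤ g v)
    (hlevel : ∀ t : ℝ, 0 < t →
      (Finset.univ.filter (fun v => t ≤ g v)).card ≤ k) :
    φ * ∑ v, g v ^ 2 ≤ (1 / 2) * ∑ u, ∑ v, a u v * |g u ^ 2 - g v ^ 2| := by
  apply coarea_aux k a hsymm hpos φ hφ0 hiso (Fintype.card V)
  · intro v; positivity
  · exact le_trans (Finset.card_filter_le _ _) (by simp)
  · intro t ht
    have hsub : (Finset.univ.filter (fun v => t ≤ g v ^ 2)) ⊆
        (Finset.univ.filter (fun v => Real.sqrt t ≤ g v)) := by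
      intro v hv
      simp only [Finset.mem_filter, Finset.mem_univ, true_and] at hv ⊢
      calc Real.sqrt t ≤ Real.sqrt (g v ^ 2) := Real.sqrt_le_sqrt hv
        _ = g v := Real.sqrt_sq (hg v)
    exact le_trans (Finset.card_le_card hsub) (hlevel _ (Real.sqrt_pos.mpr ht))
end

section
/- Let δ: ℝ≥0 → ℝ^N be differentiable with δ(0) = 0 and boundary values δ_0(t) = δ_N(t) = 0, satisfying for all i ∈ [N] and t ≥ 0 the differential inequality dδ_i/dt ≤ −4(2δ_i − δ_{i−m_i} − δ_{i+m_i}) for some integers m_i ≥ 0 with 0 ≤ i − m_i and i + m_i ≤ N. Then sup_i δ_i(t) ≤ 0 for all t ≥ 0. -/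
/-!
At a time where `δ_i` is the largest coordinate, `2 δ_i - δ_{i-m_i} - δ_{i+m_i} ≥ 0`, so the
derivative of a maximal coordinate is nonpositive. This gives a maximum principle by a
first-contact argument: `δ - ε (t + 1)` starts negative, and at the first time one of its
coordinates reaches `0` that coordinate is maximal, so its derivative is at most `-ε`, whereas
it must be nonnegative because the coordinate has just come up from below `0`.
-/

open Set

theorem IsMaxOn.deriv_nonneg_of_Icc {g : ℝ → ℝ} {a b : ℝ} (h : IsMaxOn g (Icc a b) b)
    (hab : a < b) (hg : DifferentiableAt ℝ g b) : 0 ≤ deriv g b := by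
  have hcone : a - b ∈ posTangentConeAt (Icc a b) b :=
    sub_mem_posTangentConeAt_of_segment_subset (by rw [segment_symm, segment_eq_Icc hab.le])
  have := h.localize.hasFDerivWithinAt_nonpos hg.hasDerivAt.hasDerivWithinAt.hasFDerivWithinAt hcone
  rw [ContinuousLinearMap.toSpanSingleton_apply, smul_eq_mul] at this
  nlinarith

section MaximumPrinciple

variable {ι : Type*} [Finite ι] {u : ℝ → ι → ℝ}

theorem lt_zero_of_deriv_neg_at_contact (hu : ∀ i, Differentiable ℝ fun t => u t i)
    (h0 : ∀ i, u 0 i < 0)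
    (hcontact : ∀ t, 0 < t → ∀ i, u t i = 0 → (∀ j, u t j ≤ 0) →
      deriv (fun s => u s i) t < 0) :
    ∀ t, 0 ≤ t → ∀ i, u t i < 0 := by
  intro t₁ ht₁ i₁
  by_contra! hcon
  have hcont : ∀ i, Continuous fun t => u t i := fun i => (hu i).continuous
  set S := Ici 0 ∩ ⋃ i, {t | 0 ≤ u t i}
  have hS : IsClosed S :=
    isClosed_Ici.inter <| isClosed_iUnion_of_finite fun i => isClosed_le continuous_const (hcont i)
  have hSne : S.Nonempty := ⟨t₁, ht₁, mem_iUnion.2 ⟨i₁, hcon⟩⟩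
  obtain ⟨T, ⟨hT0, hTS⟩, hTmin⟩ : ∃ T, IsLeast S T :=
    ⟨_, hS.isLeast_csInf hSne ⟨0, fun t ht => ht.1⟩⟩
  obtain ⟨i, hi⟩ := mem_iUnion.1 hTS
  have hbefore : ∀ t ∈ Ico 0 T, ∀ j, u t j < 0 := fun t ht j => by
    by_contra! h
    exact (hTmin ⟨ht.1, mem_iUnion.2 ⟨j, h⟩⟩).not_gt ht.2
  have hTpos : 0 < T := lt_of_le_of_ne hT0 <| by rintro rfl; exact (h0 i).not_ge hi
  have hle : ∀ j, ∀ t ∈ Icc 0 T, u t j ≤ 0 := fun j => by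
    rw [← closure_Ico hTpos.ne]
    exact closure_minimal (fun t ht => (hbefore t ht j).le) (isClosed_le (hcont j) continuous_const)
  have hiT : u T i = 0 := le_antisymm (hle i T (right_mem_Icc.2 hT0)) hi
  have hmax : IsMaxOn (fun s => u s i) (Icc 0 T) T := fun t ht => by
    simpa only [mem_ofPred_eq, hiT] using hle i t ht
  exact (hcontact T hTpos i hiT fun j => hle j T (right_mem_Icc.2 hT0)).not_ge
    (hmax.deriv_nonneg_of_Icc hTpos (hu i T))

theorem nonpos_of_deriv_nonpos_at_max (hu : ∀ i, Differentiable ℝ fun t => u t i)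
    (h0 : ∀ i, u 0 i ≤ 0)
    (hmax : ∀ t, 0 < t → ∀ i, (∀ j, u t j ≤ u t i) → deriv (fun s => u s i) t ≤ 0) :
    ∀ t, 0 ≤ t → ∀ i, u t i ≤ 0 := by
  intro t ht i
  refine le_of_forall_pos_lt_add fun ε hε => ?_
  have hbarrier : ∀ s, HasDerivAt (fun s : ℝ => ε / (t + 1) * (s + 1)) (ε / (t + 1)) s :=
    fun s => by simpa using ((hasDerivAt_id s).add_const 1).const_mul (ε / (t + 1))
  have hεt : 0 < ε / (t + 1) := by positivity
  have key := lt_zero_of_deriv_neg_at_contact (u := fun s j => u s j - ε / (t + 1) * (s + 1))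
    (fun j => (hu j).sub fun s => (hbarrier s).differentiableAt)
    (fun j => by linarith [h0 j])
    (fun s hs j hj hle => by
      rw [HasDerivAt.deriv (f := fun s => u s j - _) ((hu j s).hasDerivAt.sub (hbarrier s))]
      linarith [hmax s hs j fun k => by linarith [hle k]])
    t ht i
  rwa [div_mul_cancel₀ _ (by linarith), sub_neg, ← zero_add ε] at key

end MaximumPrinciple

/-- Discrete maximum principle: let `δ : ℝ≥0 → ℝ^{N+1}` be differentiable with
`δ(0) = 0` and boundary values `δ_0 ≡ δ_N ≡ 0`, and suppose that for integers
`m_i` with `0 ≤ i − m_i` and `i + m_i ≤ N` one has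
`dδ_i/dt ≤ −4 (2 δ_i − δ_{i−m_i} − δ_{i+m_i})` for all `t ≥ 0`.
Then `δ_i(t) ≤ 0` for all `i` and `t ≥ 0`. -/
theorem stmt_11 (N : ℕ) (δ : ℝ → Fin (N + 1) → ℝ)
    (hdiff : ∀ i, Differentiable ℝ (fun s => δ s i))
    (h0 : ∀ i, δ 0 i = 0)
    (m : Fin (N + 1) → ℕ)
    (hm2 : ∀ i : Fin (N + 1), (i : ℕ) + m i ≤ N)
    (hineq : ∀ (i : Fin (N + 1)) (t : ℝ), 0 ≤ t →
      deriv (fun s => δ s i) t ≤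
        -4 * (2 * δ t i - δ t ⟨(i : ℕ) - m i, by omega⟩ -
          δ t ⟨(i : ℕ) + m i, by have := hm2 i; omega⟩)) :
    ∀ (t : ℝ), 0 ≤ t → ∀ i, δ t i ≤ 0 :=
  nonpos_of_deriv_nonpos_at_max hdiff (fun i => (h0 i).le) fun t ht i hmax => by
    have hleft := hmax ⟨(i : ℕ) - m i, by omega⟩
    have hright := hmax ⟨(i : ℕ) + m i, by have := hm2 i; omega⟩
    linarith [hineq i t ht.le]
end

section
/- Let G be a graph on [N] with maximal degree 4, and let π(t) be the law of the continuous-time unit-rate random walk on G with entries sorted in decreasing order π_{(1)}(t) ≥ ... ≥ π_{(N)}(t) (at a time t where the sorting permutation is locally constant). If |E(S,S^c)| ≥ c for all S of size m, then d/dt Σ_{i=1}^m π_{(i)}(t) ≤ −Σ_{j=1}^{⌊c/4⌋}(π_{(m−j+1)}(t) − π_{(m+j)}(t)) ≤ 0; in particular the sorted top-m mass Σ_{i≤m} π_{(i)}(t) is nonincreasing in t. -/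
/-!
Let `S` be the set of vertices of rank `< m`. By symmetry of `A` the contributions of edges inside
`S` cancel, so the derivative of the top-`m` mass is `-E`, where
`E = ∑_{u ∈ S, v ∉ S} A u v (π u - π v) ≥ 0` is the cut energy. Splitting each term at a value `a`
with `π v ≤ a ≤ π u` gives `E = ∑_{u ∈ S} e u (π u - a) + ∑_{v ∉ S} e' v (a - π v)`, where the
weights `e, e'` are at most the degree bound `4` and each has total mass the cut size `≥ 4⌊c/4⌋`.
By the bathtub principle such a weighted sum is at least `4` times the sum over the `⌊c/4⌋`
smallest values, i.e. over the `⌊c/4⌋` ranks closest to the cut on either side.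
-/

open Finset

namespace Finset

variable {ι : Type*}

theorem mul_sum_le_sum_mul_bathtub [DecidableEq ι] {s T : Finset ι} {w f : ι → ℝ} {K : ℝ}
    (hTs : T ⊆ s) (hw0 : ∀ i ∈ s, 0 ≤ w i) (hwK : ∀ i ∈ s, w i ≤ K) (hf0 : ∀ i ∈ s, 0 ≤ f i)
    (hlow : ∀ i ∈ T, ∀ j ∈ s \ T, f i ≤ f j) (hmass : K * #T ≤ ∑ i ∈ s, w i) :
    K * ∑ i ∈ T, f i ≤ ∑ i ∈ s, w i * f i := by
  rcases T.eq_empty_or_nonempty with rfl | hT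
  · simpa using sum_nonneg fun i hi => mul_nonneg (hw0 i hi) (hf0 i hi)
  obtain ⟨i₀, hi₀, hmax⟩ := T.exists_max_image f hT
  have hout : f i₀ * ∑ i ∈ s \ T, w i ≤ ∑ i ∈ s \ T, w i * f i := by
    rw [mul_sum]
    refine sum_le_sum fun i hi => ?_
    rw [mul_comm]
    exact mul_le_mul_of_nonneg_left (hlow i₀ hi₀ i hi) (hw0 i (sdiff_subset hi))
  have hin : ∑ i ∈ T, (K - w i) * f i ≤ f i₀ * ∑ i ∈ T, (K - w i) := by
    rw [mul_sum]
    refine sum_le_sum fun i hi => ?_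
    rw [mul_comm (f i₀)]
    exact mul_le_mul_of_nonneg_left (hmax i hi) (sub_nonneg.2 (hwK i (hTs hi)))
  simp only [sub_mul, sum_sub_distrib, ← mul_sum, sum_const, nsmul_eq_mul] at hin
  rw [← sum_sdiff hTs (f := w)] at hmass
  rw [← sum_sdiff hTs]
  -- `∑ s, w f - K ∑ T, f = ∑ s \ T, w f - ∑ T, (K - w) f ≥ f i₀ (∑ s, w - K #T) ≥ 0`
  nlinarith [mul_nonneg (hf0 i₀ (hTs hi₀)) (sub_nonneg.2 hmass)]

theorem exists_separating_value [Finite ι] (S : Finset ι) (x : ι → ℝ)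
    (h : ∀ u ∈ S, ∀ v ∉ S, x v ≤ x u) : ∃ a, (∀ u ∈ S, a ≤ x u) ∧ ∀ v ∉ S, x v ≤ a := by
  rcases S.eq_empty_or_nonempty with rfl | hS
  · obtain ⟨a, ha⟩ := (Set.finite_range x).bddAbove
    exact ⟨a, by simp, fun v _ => ha ⟨v, rfl⟩⟩
  · exact ⟨S.inf' hS x, fun u hu => inf'_le _ hu, fun v hv => le_inf' _ _ fun u hu => h u hu v hv⟩

end Finset

theorem Equiv.sum_fin_eq_sum_filter_symm {ι M : Type*} [Fintype ι] [AddCommMonoid M] {N : ℕ}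
    (σ : Fin N ≃ ι) {a q : ℕ} (h : a + q ≤ N) (g : ι → M) :
    ∑ j : Fin q, g (σ ⟨a + j, by omega⟩)
      = ∑ u with a ≤ (σ.symm u : ℕ) ∧ (σ.symm u : ℕ) < a + q, g u := by
  refine sum_bij' (fun j _ => σ ⟨a + j, by omega⟩)
    (fun u hu => ⟨σ.symm u - a, by simp only [mem_filter] at hu; omega⟩) ?_ ?_ ?_ ?_ ?_
  · intro j _
    simp
  · intro u _
    simp
  · intro j _
    simp
  · intro u hu
    simp only [mem_filter, mem_univ, true_and] at hu
    rw [← σ.eq_symm_apply, Fin.ext_iff]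
    simp only
    omega
  · intro j _
    rfl

namespace Matrix

variable {ι : Type*} [Fintype ι] [DecidableEq ι]

def cutWeight (A : Matrix ι ι ℝ) (S : Finset ι) : ℝ := ∑ u ∈ S, ∑ v ∈ Sᶜ, A u v

def cutEnergy (A : Matrix ι ι ℝ) (S : Finset ι) (x : ι → ℝ) : ℝ :=
  ∑ u ∈ S, ∑ v ∈ Sᶜ, A u v * (x u - x v)

theorem cutEnergy_eq_sum_add_sum (A : Matrix ι ι ℝ) (S : Finset ι) (x : ι → ℝ) (a : ℝ) :
    A.cutEnergy S x = ∑ u ∈ S, (∑ v ∈ Sᶜ, A u v) * (x u - a)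
      + ∑ v ∈ Sᶜ, (∑ u ∈ S, A u v) * (a - x v) := by
  simp only [cutEnergy, sum_mul]
  rw [sum_comm (s := Sᶜ), ← sum_add_distrib]
  refine sum_congr rfl fun u _ => ?_
  rw [← sum_add_distrib]
  exact sum_congr rfl fun v _ => by ring

theorem IsSymm.sum_sum_mul_sub_eq_neg_cutEnergy {A : Matrix ι ι ℝ} (hA : A.IsSymm)
    (S : Finset ι) (x : ι → ℝ) :
    ∑ u ∈ S, ∑ v, A u v * (x v - x u) = -A.cutEnergy S x := by
  have hinner : ∑ u ∈ S, ∑ v ∈ S, A u v * (x v - x u) = 0 := by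
    have hanti : ∑ u ∈ S, ∑ v ∈ S, A u v * (x v - x u)
        = -∑ u ∈ S, ∑ v ∈ S, A u v * (x v - x u) := by
      conv_lhs => rw [sum_comm]
      simp only [← sum_neg_distrib]
      exact sum_congr rfl fun u _ => sum_congr rfl fun v _ => by rw [hA.apply]; ring
    linarith
  simp only [← sum_add_sum_compl S, sum_add_distrib, hinner, zero_add, cutEnergy,
    ← sum_neg_distrib]
  exact sum_congr rfl fun u _ => sum_congr rfl fun v _ => by ring

theorem IsSymm.mul_sum_sub_sum_le_cutEnergy {A : Matrix ι ι ℝ} (hA : A.IsSymm)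
    (hA0 : ∀ u v, 0 ≤ A u v) {K : ℝ} (hdeg : ∀ u, ∑ v, A u v ≤ K) {S L R : Finset ι}
    {x : ι → ℝ} (hLS : L ⊆ S) (hRS : R ⊆ Sᶜ) (hLR : #L = #R) (hcut : K * #L ≤ A.cutWeight S)
    (hx : ∀ u ∈ S, ∀ v ∉ S, x v ≤ x u) (hL : ∀ i ∈ L, ∀ j ∈ S \ L, x i ≤ x j)
    (hR : ∀ i ∈ R, ∀ j ∈ Sᶜ \ R, x j ≤ x i) :
    K * (∑ i ∈ L, x i - ∑ i ∈ R, x i) ≤ A.cutEnergy S x := by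
  obtain ⟨a, haS, haSc⟩ := S.exists_separating_value x hx
  have hrow_le : ∀ T u, ∑ v ∈ T, A u v ≤ K := fun T u =>
    (sum_le_univ_sum_of_nonneg (hA0 u)).trans (hdeg u)
  have hLbound := mul_sum_le_sum_mul_bathtub (s := S) (w := fun u => ∑ v ∈ Sᶜ, A u v)
    (f := fun u => x u - a) hLS (fun u _ => sum_nonneg fun v _ => hA0 u v)
    (fun u _ => hrow_le _ u) (fun u hu => sub_nonneg.2 (haS u hu))
    (fun i hi j hj => sub_le_sub_right (hL i hi j hj) a) hcut
  have hRbound := mul_sum_le_sum_mul_bathtub (s := Sᶜ) (w := fun v => ∑ u ∈ S, A u v)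
    (f := fun v => a - x v) hRS (fun v _ => sum_nonneg fun u _ => hA0 u v)
    (fun v _ => by simpa only [hA.apply] using hrow_le S v)
    (fun v hv => sub_nonneg.2 (haSc v (mem_compl.1 hv)))
    (fun i hi j hj => sub_le_sub_left (hR i hi j hj) a)
    (by rw [← hLR, sum_comm]; exact hcut)
  simp only [sum_sub_distrib, sum_const, nsmul_eq_mul] at hLbound hRbound
  rw [cutEnergy_eq_sum_add_sum A S x a]
  rw [← hLR] at hRbound
  linarith

theorem IsSymm.mul_sum_rank_gap_le_cutEnergy {N m q : ℕ} {A : Matrix ι ι ℝ} (hA : A.IsSymm)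
    (hA0 : ∀ u v, 0 ≤ A u v) {K : ℝ} (hdeg : ∀ u, ∑ v, A u v ≤ K) (σ : Fin N ≃ ι)
    {x : ι → ℝ} (hx : Antitone (x ∘ σ)) (hqm : q ≤ m) (hmN : m + q ≤ N)
    (hcut : K * q ≤ A.cutWeight {u | (σ.symm u : ℕ) < m}) :
    K * ∑ j : Fin q, (x (σ ⟨m - (j + 1), by omega⟩) - x (σ ⟨m + j, by omega⟩))
      ≤ A.cutEnergy {u | (σ.symm u : ℕ) < m} x := by
  have hxσ : ∀ u v, σ.symm u ≤ σ.symm v → x v ≤ x u := fun u v h => by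
    simpa using hx h
  have hLsum := σ.sum_fin_eq_sum_filter_symm (a := m - q) (q := q) (by omega) x
  have hRsum := σ.sum_fin_eq_sum_filter_symm hmN x
  have hLcard := σ.sum_fin_eq_sum_filter_symm (a := m - q) (q := q) (by omega) (fun _ => 1)
  have hRcard := σ.sum_fin_eq_sum_filter_symm hmN (fun _ => 1)
  simp only [sum_const, card_univ, Fintype.card_fin, smul_eq_mul, mul_one] at hLcard hRcard
  have hrev : ∑ j : Fin q, x (σ ⟨m - (j + 1), by omega⟩)
      = ∑ j : Fin q, x (σ ⟨m - q + j, by omega⟩) :=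
    Fintype.sum_equiv Fin.revPerm _ _ fun j => by
      congr 2
      ext
      simp only [Fin.revPerm_apply, Fin.val_rev]
      omega
  rw [sum_sub_distrib, hrev, hLsum, hRsum]
  refine hA.mul_sum_sub_sum_le_cutEnergy hA0 hdeg ?_ ?_ (hLcard.symm.trans hRcard)
    (by rw [← hLcard]; exact hcut) ?_ ?_ ?_
  · intro u
    simp only [mem_filter, mem_univ, true_and]
    omega
  · intro u
    simp only [mem_filter, mem_compl, mem_univ, true_and]
    omega
  · intro u hu v hv
    simp only [mem_filter, mem_univ, true_and] at hu hv
    exact hxσ u v (by rw [Fin.le_def]; omega)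
  · intro u hu v hv
    simp only [mem_sdiff, mem_filter, mem_univ, true_and] at hu hv
    exact hxσ v u (by rw [Fin.le_def]; omega)
  · intro u hu v hv
    simp only [mem_sdiff, mem_compl, mem_filter, mem_univ, true_and] at hu hv
    exact hxσ u v (by rw [Fin.le_def]; omega)

end Matrix

/-- Decrease of the sorted top-`m` mass: let `π` be the law of the continuous-time
unit-rate random walk on a graph on `[N]` with symmetric 0/1 adjacency matrix `A` and
maximal degree 4 (so `dπ_i/dt = Σ_j A_{ij}(π_j − π_i)`), and suppose that at time `t` the
entries are sorted in decreasing order along the permutation `σ`, i.e.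
`π_{σ(1)}(t) ≥ ... ≥ π_{σ(N)}(t)`.  If every set `S` of size `m` satisfies
`|E(S,Sᶜ)| ≥ c`, then any derivative `D` at `t` of the top-`m` mass
`Σ_{i ≤ m} π_{(i)}` satisfies
`D ≤ −Σ_{j=1}^{⌊c/4⌋} (π_{(m−j+1)}(t) − π_{(m+j)}(t))` and in particular `D ≤ 0`,
so the top-`m` mass is nonincreasing. -/
theorem stmt_15 (N m c : ℕ)
    (A : Matrix (Fin N) (Fin N) ℝ) (hsymm : A.IsSymm)
    (h01 : ∀ u v, A u v = 0 ∨ A u v = 1)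
    (hdeg : ∀ v, ∑ u, A v u ≤ 4)
    (π : ℝ → Fin N → ℝ) (t : ℝ)
    (hwalk : ∀ (i : Fin N) (s : ℝ),
      HasDerivAt (fun r => π r i) (∑ j, A i j * (π s j - π s i)) s)
    (σ : Equiv.Perm (Fin N))
    (hsorted : ∀ i j : Fin N, i ≤ j → π t (σ j) ≤ π t (σ i))
    (hcut : ∀ S : Finset (Fin N), S.card = m →
      (c : ℝ) ≤ ∑ u ∈ S, ∑ v ∈ Sᶜ, A u v)
    (hqm : c / 4 ≤ m) (hmN : m + c / 4 ≤ N)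
    (D : ℝ)
    (hD : HasDerivAt
      (fun s => ∑ i ∈ Finset.univ.filter (fun j : Fin N => (j : ℕ) < m), π s (σ i)) D t) :
    D ≤ -(∑ j : Fin (c / 4),
        (π t (σ ⟨m - ((j : ℕ) + 1), by have := j.isLt; omega⟩) -
          π t (σ ⟨m + (j : ℕ), by have := j.isLt; omega⟩))) ∧ D ≤ 0 := by
  set S : Finset (Fin N) := {u | (σ.symm u : ℕ) < m}
  have hmemS : ∀ i, i ∈ univ.filter (fun j : Fin N => (j : ℕ) < m) ↔ σ i ∈ S := by simp [S]
  have hA0 : ∀ u v, 0 ≤ A u v := fun u v => by rcases h01 u v with h | h <;> simp [h]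
  have hD_eq : D = -A.cutEnergy S (π t) := by
    rw [hD.unique (HasDerivAt.fun_sum fun i _ => hwalk (σ i) t),
      ← hsymm.sum_sum_mul_sub_eq_neg_cutEnergy]
    exact sum_equiv σ hmemS fun _ _ => rfl
  have hScard : #S = m := by
    rw [← card_equiv σ hmemS, Fin.card_filter_val_lt]
    omega
  have hcutS : 4 * ((c / 4 : ℕ) : ℝ) ≤ A.cutWeight S :=
    le_trans (by exact_mod_cast Nat.mul_div_le c 4) (hcut S hScard)
  have hgap := hsymm.mul_sum_rank_gap_le_cutEnergy hA0 hdeg σ (x := π t)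
    (fun i j h => hsorted i j h) hqm hmN hcutS
  have hgap_nonneg : 0 ≤ ∑ j : Fin (c / 4),
      (π t (σ ⟨m - ((j : ℕ) + 1), by omega⟩) - π t (σ ⟨m + (j : ℕ), by omega⟩)) :=
    sum_nonneg fun j _ => sub_nonneg.2 (hsorted _ _ (Fin.mk_le_mk.2 (by omega)))
  constructor <;> linarith
end
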